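/- Let n ≥ 3 and let D₈ ⊆ ℝ² be the octagon given as the convex hull of the eight points (−3/10, −2), (3/10, −1), (7/10, 0), (13/10, 2), (3/10, 2), (−3/10, 1), (−7/10, 0), (−13/10, −2). Then the prism P = D₈ × [−1/2, 1/2]ⁿ⁻² ⊆ ℝⁿ admits no lattice tiling of ℝⁿ: there is no full-rank lattice Λ ⊆ ℝⁿ such that P + Λ is a 1-fold lattice tiling of ℝⁿ. -/

import Mathlib

open Set

/-- `Λ` is a full-rank lattice in `ℝⁿ` (identified with `Fin n → ℝ`). -/
def IsFullLattice {n : ℕ} (Λ : Set (Fin n → ℝ)) : Prop :=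
  ∃ b : Module.Basis (Fin n) ℝ (Fin n → ℝ),
    Λ = (Submodule.span ℤ (Set.range ⇑b) : Set (Fin n → ℝ))

/-- `K + Λ` is a `k`-fold tiling of `ℝⁿ`. -/
def IsKFoldTiling {n : ℕ} (K Λ : Set (Fin n → ℝ)) (k : ℕ) : Prop :=
  ∀ x : Fin n → ℝ,
    (k : ℕ∞) ≤ {v | v ∈ Λ ∧ x - v ∈ K}.encard ∧
    {v | v ∈ Λ ∧ x - v ∈ interior K}.encard ≤ (k : ℕ∞)

/-- The octagon `D₈`. -/
noncomputable def D₈ : Set (Fin 2 → ℝ) :=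
  convexHull ℝ ({![-3/10, -2], ![3/10, -1], ![7/10, 0], ![13/10, 2],
    ![3/10, 2], ![-3/10, 1], ![-7/10, 0], ![-13/10, -2]} : Set (Fin 2 → ℝ))

/-- Projection of `ℝⁿ` onto the first two coordinates. -/
def proj2 {n : ℕ} (hn : 2 ≤ n) (x : Fin n → ℝ) : Fin 2 → ℝ :=
  fun j => x (Fin.castLE hn j)

/-- The prism `Q × [-1/2, 1/2]ⁿ⁻²` over a planar set `Q`, viewed in
`ℝⁿ = ℝ² × ℝⁿ⁻²`. -/
def prism {n : ℕ} (hn : 2 ≤ n) (Q : Set (Fin 2 → ℝ)) : Set (Fin n → ℝ) :=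
  {x | proj2 hn x ∈ Q ∧ ∀ l : Fin n, 2 ≤ (l : ℕ) → |x l| ≤ 1 / 2}

/-!
Fixing the last `n - 2` coordinates at a generic value slices a lattice tiling of the prism into
a tiling of the plane by translates of `D₈`, and `D₈` admits no such tiling. Two tiles through a
point `q` are separated by a linear functional that attains its maximum on the first and its
minimum on the second at `q`. Let `q` be the vertex `C` of a tile. The functional separating it
from the tile that covers the points just beyond the edge `BC` near `q` is confined to a narrow
cone, which forces `q` onto the edge `GF` of that tile; likewise the tile beyond the edge `CD`
has `q` on its edge `GH`. But no nonzero functional is maximal on `D₈` at a point of `GF` and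
minimal at a point of `GH`, so these two tiles cannot be separated.
-/

open Metric Filter Topology
open scoped Pointwise

lemma exists_separating_of_disjoint_interior {E : Type*} [TopologicalSpace E]
    [AddCommGroup E] [IsTopologicalAddGroup E] [Module ℝ E] [ContinuousSMul ℝ E]
    [LocallyConvexSpace ℝ E] {s t : Set E} (hs : Convex ℝ s) (ht : Convex ℝ t)
    (hsi : (interior s).Nonempty) (hti : (interior t).Nonempty)
    (hst : Disjoint (interior s) (interior t)) :
    ∃ f : StrongDual ℝ E, f ≠ 0 ∧ ∀ x ∈ s, ∀ y ∈ t, f x ≤ f y := by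
  obtain ⟨f, κ, hf, hs', ht'⟩ :=
    geometric_hahn_banach_of_nonempty_interior hs ht.interior hst hsi hti
  refine ⟨f, hf, fun x hx y hy => (hs' x hx).trans ?_⟩
  have hy' : y ∈ closure (interior t) := by
    rw [ht.closure_interior_eq_closure_of_nonempty_interior hti]
    exact subset_closure hy
  exact closure_minimal ht' (isClosed_le continuous_const f.continuous) hy'

lemma IsMinOn.nonneg_of_add_smul_mem {E : Type*} [TopologicalSpace E] [AddCommGroup E]
    [Module ℝ E] {f : StrongDual ℝ E} {K : Set E} {p w : E} {ε : ℝ} (hmin : IsMinOn f K p)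
    (hε : 0 < ε) (hw : p + ε • w ∈ K) : 0 ≤ f w := by
  have h : f p ≤ f (p + ε • w) := hmin hw
  rw [map_add, map_smul, smul_eq_mul, le_add_iff_nonneg_right] at h
  exact (mul_nonneg_iff_of_pos_left hε).1 h

lemma TotallyBounded.finite_of_pairwise_le_dist {X : Type*} [PseudoMetricSpace X] {s A : Set X}
    (hs : TotallyBounded s) (hA : A ⊆ s) {ε : ℝ} (hε : 0 < ε)
    (hsep : A.Pairwise fun x y => ε ≤ dist x y) : A.Finite := by
  obtain ⟨t, -, ht, hcover⟩ := finite_approx_of_totallyBounded hs (ε / 2) (half_pos hε)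
  refine (ht.biUnion fun y _ => (?_ : (A ∩ ball y (ε / 2)).Subsingleton).finite).subset
    fun x hx => ?_
  · rintro x ⟨hx, hxy⟩ x' ⟨hx', hx'y⟩
    by_contra hne
    linarith [hsep hx hx' hne, dist_triangle_right x x' y, mem_ball.1 hxy, mem_ball.1 hx'y]
  · obtain ⟨y, hy, hxy⟩ := mem_iUnion₂.1 (hcover (hA hx))
    exact mem_iUnion₂.2 ⟨y, hy, hx, hxy⟩

section Tiling

variable {n : ℕ} {K S : Set (Fin n → ℝ)}

lemma IsKFoldTiling.exists_sub_mem (h : IsKFoldTiling K S 1) (x : Fin n → ℝ) :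
    ∃ u ∈ S, x - u ∈ K := by
  obtain ⟨u, hu, hx⟩ := one_le_encard_iff_nonempty.1 (h x).1
  exact ⟨u, hu, hx⟩

lemma IsKFoldTiling.eq_of_sub_mem_interior (h : IsKFoldTiling K S 1) {x u u' : Fin n → ℝ}
    (hu : u ∈ S) (hu' : u' ∈ S) (hx : x - u ∈ interior K) (hx' : x - u' ∈ interior K) :
    u = u' :=
  encard_le_one_iff.1 (h x).2 u u' ⟨hu, hx⟩ ⟨hu', hx'⟩

lemma IsKFoldTiling.disjoint_interior_vadd (h : IsKFoldTiling K S 1) {u u' : Fin n → ℝ}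
    (hu : u ∈ S) (hu' : u' ∈ S) (hne : u ≠ u') :
    Disjoint (interior (u +ᵥ K)) (interior (u' +ᵥ K)) := by
  rw [interior_vadd, interior_vadd, disjoint_left]
  intro x hx hx'
  rw [mem_vadd_set_iff_neg_vadd_mem, vadd_eq_add, neg_add_eq_sub] at hx hx'
  exact hne (h.eq_of_sub_mem_interior hu hu' hx hx')

lemma IsKFoldTiling.exists_isMaxOn_isMinOn (h : IsKFoldTiling K S 1) (hK : Convex ℝ K)
    (hKi : (interior K).Nonempty) {u u' q : Fin n → ℝ} (hu : u ∈ S) (hu' : u' ∈ S)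
    (hne : u ≠ u') (hq : q - u ∈ K) (hq' : q - u' ∈ K) :
    ∃ f : StrongDual ℝ (Fin n → ℝ), f ≠ 0 ∧ IsMaxOn f K (q - u) ∧ IsMinOn f K (q - u') := by
  obtain ⟨f, hf, hsep⟩ := exists_separating_of_disjoint_interior (hK.vadd u) (hK.vadd u')
    (by rw [interior_vadd]; exact hKi.vadd_set) (by rw [interior_vadd]; exact hKi.vadd_set)
    (h.disjoint_interior_vadd hu hu' hne)
  have hsep' : ∀ y ∈ K, ∀ y' ∈ K, f y - f y' ≤ f u' - f u := fun y hy y' hy' => by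
    have := hsep _ (vadd_mem_vadd_set (a := u) hy) _ (vadd_mem_vadd_set (a := u') hy')
    simp only [vadd_eq_add, map_add] at this
    linarith
  refine ⟨f, hf, fun y hy => ?_, fun y hy => ?_⟩
  · show f y ≤ f (q - u)
    linarith [hsep' y hy _ hq', map_sub f q u, map_sub f q u']
  · show f (q - u') ≤ f y
    linarith [hsep' _ hq y hy, map_sub f q u, map_sub f q u']

lemma IsKFoldTiling.le_dist (h : IsKFoldTiling K S 1) {z : Fin n → ℝ} {r : ℝ}
    (hr : ball z r ⊆ interior K) {u u' : Fin n → ℝ} (hu : u ∈ S) (hu' : u' ∈ S)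
    (hne : u ≠ u') : 2 * r ≤ dist u u' := by
  by_contra! hlt
  have hmid : ∀ v v' : Fin n → ℝ, dist v v' < 2 * r →
      z + (1 / 2 : ℝ) • (v + v') - v ∈ interior K := fun v v' hvv' => hr <| by
    rw [mem_ball, dist_eq_norm, show z + (1 / 2 : ℝ) • (v + v') - v - z = (1 / 2 : ℝ) • (v' - v)
      by module, norm_smul, ← dist_eq_norm, dist_comm]
    norm_num
    linarith
  exact hne (h.eq_of_sub_mem_interior hu hu' (hmid u u' hlt)
    (add_comm u u' ▸ hmid u' u (dist_comm u u' ▸ hlt)))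

lemma IsKFoldTiling.exists_sub_mem_add_smul_mem (h : IsKFoldTiling K S 1) (hKc : IsClosed K)
    (hKb : Bornology.IsBounded K) (hKi : (interior K).Nonempty) (q w : Fin n → ℝ) :
    ∃ u ∈ S, q - u ∈ K ∧ ∃ ε : ℝ, 0 < ε ∧ q - u + ε • w ∈ K := by
  obtain ⟨z, hz⟩ := hKi
  obtain ⟨r, hr, hball⟩ := Metric.isOpen_iff.1 isOpen_interior z hz
  obtain ⟨R, hR⟩ := (isBounded_iff_subset_closedBall 0).1 hKb
  -- Only the finitely many tiles in `F` meet the segment from `q` to `q + w`; one of them meets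
  -- it at points arbitrarily close to `q`, and being closed it contains `q`.
  set F := S ∩ closedBall q (R + ‖w‖)
  have hF : F.Finite := (isCompact_closedBall q _).totallyBounded.finite_of_pairwise_le_dist
    inter_subset_right (by positivity) fun u hu u' hu' hne => h.le_dist hball hu.1 hu'.1 hne
  have hev : ∀ᶠ s in 𝓝[>] (0 : ℝ), ∃ u ∈ F, q - u + s • w ∈ K := by
    filter_upwards [Ioo_mem_nhdsGT one_pos] with s hs
    obtain ⟨u, hu, hK⟩ := h.exists_sub_mem (q + s • w)
    rw [add_sub_right_comm] at hK
    refine ⟨u, ⟨hu, ?_⟩, hK⟩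
    have hsw : ‖s • w‖ ≤ ‖w‖ := by
      rw [norm_smul, Real.norm_of_nonneg hs.1.le]
      exact mul_le_of_le_one_left (norm_nonneg w) hs.2.le
    rw [mem_closedBall, dist_comm, dist_eq_norm]
    calc ‖q - u‖ = ‖(q - u + s • w) - s • w‖ := by rw [add_sub_cancel_right]
      _ ≤ R + ‖w‖ := (norm_sub_le _ _).trans (add_le_add (mem_closedBall_zero_iff.1 (hR hK)) hsw)
  obtain ⟨u, huF, hfreq⟩ := hF.frequently_exists.1 hev.frequently
  refine ⟨u, huF.1, hKc.mem_of_frequently_of_tendsto hfreq ?_, ?_⟩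
  · have : Continuous fun s : ℝ => q - u + s • w := by fun_prop
    simpa using (this.tendsto' 0 _ (by simp)).mono_left nhdsWithin_le_nhds
  · obtain ⟨ε, hε, hεpos⟩ := (hfreq.and_eventually self_mem_nhdsWithin).exists
    exact ⟨ε, hεpos, hε⟩

end Tiling

section Prism

variable {n : ℕ} (hn : 2 ≤ n)

lemma IsFullLattice.countable {Λ : Set (Fin n → ℝ)} (h : IsFullLattice Λ) : Λ.Countable := by
  obtain ⟨b, rfl⟩ := h
  exact countable_coe_iff.1 (inferInstance : Countable (Submodule.span ℤ (range b)))

lemma exists_forall_abs_sub_ne {Λ : Set (Fin n → ℝ)} (hΛ : Λ.Countable) (d : ℝ) :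
    ∃ r : ℝ, ∀ v ∈ Λ, ∀ l, |v l - r| ≠ d := by
  have hC : (⋃ v ∈ Λ, ⋃ l : Fin n, ({v l - d, v l + d} : Set ℝ)).Countable :=
    hΛ.biUnion fun v _ => countable_iUnion fun l => (toFinite _).countable
  obtain ⟨r, hr⟩ := (hC.dense_compl ℝ).nonempty
  refine ⟨r, fun v hv l hvl => hr (mem_biUnion hv (mem_iUnion.2 ⟨l, ?_⟩))⟩
  rcases eq_or_eq_neg_of_abs_eq hvl with h | h
  · exact Or.inl (by linarith)
  · exact Or.inr (mem_singleton_iff.2 (by linarith))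

lemma exists_proj2_eq (y : Fin 2 → ℝ) (r : ℝ) :
    ∃ x : Fin n → ℝ, proj2 hn x = y ∧ ∀ l : Fin n, 2 ≤ (l : ℕ) → x l = r :=
  ⟨fun l => if h : (l : ℕ) < 2 then y ⟨l, h⟩ else r, funext fun j => dif_pos j.isLt,
    fun _ hl => dif_neg hl.not_gt⟩

lemma mem_interior_prism {Q : Set (Fin 2 → ℝ)} {x : Fin n → ℝ} (hx : proj2 hn x ∈ interior Q)
    (hx' : ∀ l : Fin n, 2 ≤ (l : ℕ) → |x l| < 1 / 2) : x ∈ interior (prism hn Q) := by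
  have hproj : Continuous (proj2 hn) := continuous_pi fun j => continuous_apply _
  have hQ : ∀ᶠ z in 𝓝 x, proj2 hn z ∈ Q :=
    hproj.continuousAt.preimage_mem_nhds (mem_interior_iff_mem_nhds.1 hx)
  have hcube : ∀ᶠ z in 𝓝 x, ∀ l : Fin n, 2 ≤ (l : ℕ) → |z l| ≤ 1 / 2 := by
    refine eventually_all.2 fun l => ?_
    by_cases hl : 2 ≤ (l : ℕ)
    · exact ((continuous_apply l).abs.continuousAt.eventually
        (eventually_le_nhds (hx' l hl))).mono fun z hz _ => hz
    · exact Eventually.of_forall fun z h => absurd h hl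
  exact mem_interior_iff_mem_nhds.2 (hQ.and hcube)

lemma exists_isKFoldTiling_of_prism {Q : Set (Fin 2 → ℝ)} {Λ : Set (Fin n → ℝ)} (hΛ : Λ.Countable)
    (h : IsKFoldTiling (prism hn Q) Λ 1) : ∃ S : Set (Fin 2 → ℝ), IsKFoldTiling Q S 1 := by
  obtain ⟨r, hr⟩ := exists_forall_abs_sub_ne hΛ (1 / 2)
  refine ⟨proj2 hn '' {v | v ∈ Λ ∧ ∀ l : Fin n, 2 ≤ (l : ℕ) → |v l - r| < 1 / 2},
    fun y => ?_⟩
  obtain ⟨x, rfl, hxr⟩ := exists_proj2_eq hn y r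
  have hxv : ∀ (v : Fin n → ℝ) (l : Fin n), 2 ≤ (l : ℕ) → |(x - v) l| = |v l - r| :=
    fun v l hl => by rw [Pi.sub_apply, hxr l hl, abs_sub_comm]
  constructor
  · obtain ⟨v, hv, hxvQ, hxvr⟩ := h.exists_sub_mem x
    rw [Nat.cast_one, one_le_encard_iff_nonempty]
    refine ⟨proj2 hn v, ⟨v, ⟨hv, fun l hl => ?_⟩, rfl⟩, hxvQ⟩
    exact (hxv v l hl ▸ hxvr l hl).lt_of_ne (hr v hv l)
  · rw [Nat.cast_one, encard_le_one_iff]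
    rintro _ _ ⟨⟨v, ⟨hv, hvr⟩, rfl⟩, hyv⟩ ⟨⟨v', ⟨hv', hv'r⟩, rfl⟩, hyv'⟩
    have hint : ∀ w, (∀ l : Fin n, 2 ≤ (l : ℕ) → |w l - r| < 1 / 2) →
        proj2 hn x - proj2 hn w ∈ interior Q → x - w ∈ interior (prism hn Q) := fun w hw hxw =>
      mem_interior_prism hn hxw fun l hl => hxv w l hl ▸ hw l hl
    rw [h.eq_of_sub_mem_interior hv hv' (hint v hvr hyv) (hint v' hv'r hyv')]

end Prism

section Octagon

-- The vertices of `D₈`, in the order of its definition, are `A, B, …, H`.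

lemma D8_vertices_mem : ![-3/10, -2] ∈ D₈ ∧ ![3/10, -1] ∈ D₈ ∧ ![7/10, 0] ∈ D₈ ∧
    ![13/10, 2] ∈ D₈ ∧ ![3/10, 2] ∈ D₈ ∧ ![-3/10, 1] ∈ D₈ ∧ ![-7/10, 0] ∈ D₈ ∧
    ![-13/10, -2] ∈ D₈ := by
  refine ⟨?_, ?_, ?_, ?_, ?_, ?_, ?_, ?_⟩ <;> exact subset_convexHull ℝ _ (by simp)

lemma convex_D8 : Convex ℝ D₈ := convex_convexHull ℝ _

lemma isCompact_D8 : IsCompact D₈ := (toFinite _).isCompact_convexHull ℝ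

lemma le_of_mem_D8 {a b r : ℝ} (h : ∀ v ∈ ({![-3/10, -2], ![3/10, -1], ![7/10, 0], ![13/10, 2],
    ![3/10, 2], ![-3/10, 1], ![-7/10, 0], ![-13/10, -2]} : Set (Fin 2 → ℝ)),
      a * v 0 + b * v 1 ≤ r) {p : Fin 2 → ℝ} (hp : p ∈ D₈) : a * p 0 + b * p 1 ≤ r :=
  convexHull_min h (convex_halfSpace_le ⟨fun x y => by simp only [Pi.add_apply]; ring,
    fun c x => by simp only [Pi.smul_apply, smul_eq_mul]; ring⟩ r) hp

-- The supporting lines of the edges `AB, BC, …, HA`.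
lemma D8_facets {p : Fin 2 → ℝ} (hp : p ∈ D₈) :
    p 0 - 3/5 * p 1 ≤ 9/10 ∧ p 0 - 2/5 * p 1 ≤ 7/10 ∧ 2 * p 0 - 3/5 * p 1 ≤ 7/5 ∧ p 1 ≤ 2 ∧
    -p 0 + 3/5 * p 1 ≤ 9/10 ∧ -p 0 + 2/5 * p 1 ≤ 7/10 ∧ -2 * p 0 + 3/5 * p 1 ≤ 7/5 ∧
    -2 ≤ p 1 := by
  refine ⟨?_, ?_, ?_, ?_, ?_, ?_, ?_, ?_⟩
  · linarith [le_of_mem_D8 (a := 1) (b := -3/5) (r := 9/10) (by norm_num) hp]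
  · linarith [le_of_mem_D8 (a := 1) (b := -2/5) (r := 7/10) (by norm_num) hp]
  · linarith [le_of_mem_D8 (a := 2) (b := -3/5) (r := 7/5) (by norm_num) hp]
  · linarith [le_of_mem_D8 (a := 0) (b := 1) (r := 2) (by norm_num) hp]
  · linarith [le_of_mem_D8 (a := -1) (b := 3/5) (r := 9/10) (by norm_num) hp]
  · linarith [le_of_mem_D8 (a := -1) (b := 2/5) (r := 7/10) (by norm_num) hp]
  · linarith [le_of_mem_D8 (a := -2) (b := 3/5) (r := 7/5) (by norm_num) hp]
  · linarith [le_of_mem_D8 (a := 0) (b := -1) (r := 2) (by norm_num) hp]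

lemma ball_subset_D8 : ball (0 : Fin 2 → ℝ) (1/5) ⊆ D₈ := by
  intro p hp
  rw [mem_ball_zero_iff, pi_norm_lt_iff (by norm_num)] at hp
  obtain ⟨h0, h0'⟩ := abs_lt.1 (hp 0)
  obtain ⟨h1, h1'⟩ := abs_lt.1 (hp 1)
  obtain ⟨hA, -, hC, -, hE, -, hG, -⟩ := D8_vertices_mem
  -- `p` is the midpoint of a point of the diagonal `GC` and a point of the diagonal `AE`.
  set s := (2 * p 0 - 3/10 * p 1 + 7/10) / (7/5) with hs
  set t := (p 1 + 1) / 2 with ht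
  have hGC := convex_D8 hG hC (by linarith : 0 ≤ 1 - s) (by linarith : 0 ≤ s) (by ring)
  have hAE := convex_D8 hA hE (by linarith : 0 ≤ 1 - t) (by linarith : 0 ≤ t) (by ring)
  convert convex_D8 hGC hAE (by norm_num : (0 : ℝ) ≤ 1/2) (by norm_num : (0 : ℝ) ≤ 1/2)
    (by norm_num) using 1
  refine funext (Fin.forall_fin_two.2 ⟨?_, ?_⟩) <;>
    simp only [Pi.add_apply, Pi.smul_apply, smul_eq_mul, Matrix.cons_val_zero, Matrix.cons_val_one,
      Matrix.cons_val_fin_one] <;>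
    linarith

lemma interior_D8_nonempty : (interior D₈).Nonempty :=
  ⟨0, mem_interior.2 ⟨_, ball_subset_D8, isOpen_ball, mem_ball_self (by norm_num)⟩⟩

lemma exists_apply_eq_fin_two (f : StrongDual ℝ (Fin 2 → ℝ)) :
    ∃ a b : ℝ, ∀ p, f p = a * p 0 + b * p 1 :=
  ⟨f ![1, 0], f ![0, 1], fun p => by
    conv_lhs => rw [show p = p 0 • ![1, 0] + p 1 • ![0, 1] by ext i; fin_cases i <;> simp]
    rw [map_add, map_smul, map_smul, smul_eq_mul, smul_eq_mul]
    ring⟩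

lemma D8_normal_cone_C {f : StrongDual ℝ (Fin 2 → ℝ)} (hf : f ≠ 0)
    (hC : IsMaxOn f D₈ ![7/10, 0]) {a b : ℝ} (hab : ∀ p, f p = a * p 0 + b * p 1) :
    0 < a ∧ -2/5 * a ≤ b ∧ b ≤ -3/10 * a := by
  obtain ⟨-, hB, -, hD, -⟩ := D8_vertices_mem
  have hCB : f ![3/10, -1] ≤ f ![7/10, 0] := hC hB
  have hCD : f ![13/10, 2] ≤ f ![7/10, 0] := hC hD
  simp only [hab, Matrix.cons_val_zero, Matrix.cons_val_one] at hCB hCD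
  refine ⟨lt_of_le_of_ne (by linarith) fun ha => hf ?_, by linarith, by linarith⟩
  have hb : b = 0 := by linarith
  ext p
  simp [hab, ← ha, hb]

lemma D8_exit_BC {ε : ℝ} (hε : 0 < ε) : ![7/10, 0] + ε • ![-7/20, -1] ∉ D₈ := fun h => by
  obtain ⟨-, hBC, -⟩ := D8_facets h
  simp only [Pi.add_apply, Pi.smul_apply, smul_eq_mul, Matrix.cons_val_zero, Matrix.cons_val_one,
    Matrix.cons_val_fin_one] at hBC
  linarith

lemma D8_exit_CD {ε : ℝ} (hε : 0 < ε) : ![7/10, 0] + ε • ![7/20, 1] ∉ D₈ := fun h => by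
  obtain ⟨-, -, hCD, -⟩ := D8_facets h
  simp only [Pi.add_apply, Pi.smul_apply, smul_eq_mul, Matrix.cons_val_zero, Matrix.cons_val_one,
    Matrix.cons_val_fin_one] at hCD
  linarith

lemma D8_exit_GF {p : Fin 2 → ℝ} (hp : p ∈ segment ℝ ![-7/10, 0] ![-3/10, 1]) {ε : ℝ}
    (hε : 0 < ε) : p + ε • ![7/20, 1] ∉ D₈ := fun h => by
  obtain ⟨s, t, -, -, hst, rfl⟩ := hp
  obtain ⟨-, -, -, -, -, hFG, -⟩ := D8_facets h
  simp only [Pi.add_apply, Pi.smul_apply, smul_eq_mul, Matrix.cons_val_zero, Matrix.cons_val_one,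
    Matrix.cons_val_fin_one] at hFG
  linarith

lemma mem_GF_of_isMinOn {f : StrongDual ℝ (Fin 2 → ℝ)} (hf : f ≠ 0)
    (hC : IsMaxOn f D₈ ![7/10, 0]) {p : Fin 2 → ℝ} (hp : p ∈ D₈) (hmin : IsMinOn f D₈ p)
    {ε : ℝ} (hε : 0 < ε) (hpw : p + ε • ![-7/20, -1] ∈ D₈) :
    p ∈ segment ℝ ![-7/10, 0] ![-3/10, 1] := by
  obtain ⟨a, b, hab⟩ := exists_apply_eq_fin_two f
  obtain ⟨ha, hb, -⟩ := D8_normal_cone_C hf hC hab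
  have hw := hmin.nonneg_of_add_smul_mem hε hpw
  obtain ⟨-, -, -, -, -, -, hG, -⟩ := D8_vertices_mem
  replace hG : f p ≤ f ![-7/10, 0] := hmin hG
  simp only [hab, Matrix.cons_val_zero, Matrix.cons_val_one] at hw hG
  obtain ⟨-, -, -, -, hEF, hFG, hGH, -⟩ := D8_facets hp
  -- `-f` is a combination of the outer normals of the edges `FG` and `GH`, with positive
  -- weight on `FG`; so a minimiser of `f` lies on the line `FG`.
  have hline : -p 0 + 2/5 * p 1 = 7/10 := by
    nlinarith [mul_nonneg (by linarith : 0 ≤ 2 * a + 5 * b)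
      (by linarith : 0 ≤ 7/5 - (-2 * p 0 + 3/5 * p 1))]
  refine ⟨1 - p 1, p 1, by linarith, by linarith, by ring, ?_⟩
  refine funext (Fin.forall_fin_two.2 ⟨?_, ?_⟩) <;>
    simp only [Pi.add_apply, Pi.smul_apply, smul_eq_mul, Matrix.cons_val_zero, Matrix.cons_val_one,
      Matrix.cons_val_fin_one] <;>
    linarith

lemma mem_GH_of_isMinOn {f : StrongDual ℝ (Fin 2 → ℝ)} (hf : f ≠ 0)
    (hC : IsMaxOn f D₈ ![7/10, 0]) {p : Fin 2 → ℝ} (hp : p ∈ D₈) (hmin : IsMinOn f D₈ p)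
    {ε : ℝ} (hε : 0 < ε) (hpw : p + ε • ![7/20, 1] ∈ D₈) :
    p ∈ segment ℝ ![-7/10, 0] ![-13/10, -2] := by
  obtain ⟨a, b, hab⟩ := exists_apply_eq_fin_two f
  obtain ⟨ha, -, hb⟩ := D8_normal_cone_C hf hC hab
  have hw := hmin.nonneg_of_add_smul_mem hε hpw
  obtain ⟨-, -, -, -, -, -, hG, -⟩ := D8_vertices_mem
  replace hG : f p ≤ f ![-7/10, 0] := hmin hG
  simp only [hab, Matrix.cons_val_zero, Matrix.cons_val_one] at hw hG
  obtain ⟨-, -, -, -, -, hFG, hGH, hHA⟩ := D8_facets hp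
  -- as in `mem_GF_of_isMinOn`, now with positive weight on `GH`
  have hline : -2 * p 0 + 3/5 * p 1 = 7/5 := by
    nlinarith [mul_nonneg (by linarith : 0 ≤ -10 * b - 3 * a)
      (by linarith : 0 ≤ 7/10 - (-p 0 + 2/5 * p 1))]
  refine ⟨1 + p 1 / 2, -p 1 / 2, by linarith, by linarith, by ring, ?_⟩
  refine funext (Fin.forall_fin_two.2 ⟨?_, ?_⟩) <;>
    simp only [Pi.add_apply, Pi.smul_apply, smul_eq_mul, Matrix.cons_val_zero, Matrix.cons_val_one,
      Matrix.cons_val_fin_one] <;>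
    linarith

lemma eq_zero_of_isMaxOn_GF_of_isMinOn_GH {f : StrongDual ℝ (Fin 2 → ℝ)} {p p' : Fin 2 → ℝ}
    (hp : p ∈ segment ℝ ![-7/10, 0] ![-3/10, 1]) (hmax : IsMaxOn f D₈ p)
    (hp' : p' ∈ segment ℝ ![-7/10, 0] ![-13/10, -2]) (hmin : IsMinOn f D₈ p') : f = 0 := by
  obtain ⟨a, b, hab⟩ := exists_apply_eq_fin_two f
  have hGF := (f.toLinearMap.convexOn convex_univ).le_on_segment trivial trivial hp
  have hGH := (f.toLinearMap.concaveOn convex_univ).ge_on_segment trivial trivial hp'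
  have hv : ∀ v ∈ D₈, f v ≤ f p ∧ f p' ≤ f v := fun v hv => ⟨hmax hv, hmin hv⟩
  obtain ⟨hA, -, hC, -, hE, hF, hG, hH⟩ := D8_vertices_mem
  have hvA := hv _ hA; have hvC := hv _ hC; have hvE := hv _ hE
  have hvF := hv _ hF; have hvG := hv _ hG; have hvH := hv _ hH
  simp only [hab, ContinuousLinearMap.coe_coe, Matrix.cons_val_zero, Matrix.cons_val_one]
    at hGF hGH hvA hvC hvE hvF hvG hvH
  have h0 : a = 0 ∧ b = 0 := by
    rcases le_max_iff.1 hGF with h₁ | h₁ <;> rcases min_le_iff.1 hGH with h₂ | h₂ <;>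
      exact ⟨by linarith, by linarith⟩
  ext q
  simp [hab, h0.1, h0.2]

theorem D8_not_isKFoldTiling_one (S : Set (Fin 2 → ℝ)) : ¬ IsKFoldTiling D₈ S 1 := by
  intro h
  have hcover := h.exists_sub_mem_add_smul_mem isCompact_D8.isClosed isCompact_D8.isBounded
    interior_D8_nonempty
  obtain ⟨u₀, hu₀, -⟩ := h.exists_sub_mem 0
  obtain ⟨q, hq₀⟩ : ∃ q, q - u₀ = ![7/10, 0] := ⟨_, add_sub_cancel_right _ _⟩
  obtain ⟨u₁, hu₁, hq₁, ε₁, hε₁, hw₁⟩ := hcover q ![-7/20, -1]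
  obtain ⟨u₂, hu₂, hq₂, ε₂, hε₂, hw₂⟩ := hcover q ![7/20, 1]
  have h₀₁ : u₀ ≠ u₁ := by rintro rfl; exact D8_exit_BC hε₁ (hq₀ ▸ hw₁)
  have h₀₂ : u₀ ≠ u₂ := by rintro rfl; exact D8_exit_CD hε₂ (hq₀ ▸ hw₂)
  obtain ⟨-, -, hC, -⟩ := D8_vertices_mem
  have hq₀' : q - u₀ ∈ D₈ := hq₀ ▸ hC
  obtain ⟨f₁, hf₁, hmax₁, hmin₁⟩ :=
    h.exists_isMaxOn_isMinOn convex_D8 interior_D8_nonempty hu₀ hu₁ h₀₁ hq₀' hq₁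
  obtain ⟨f₂, hf₂, hmax₂, hmin₂⟩ :=
    h.exists_isMaxOn_isMinOn convex_D8 interior_D8_nonempty hu₀ hu₂ h₀₂ hq₀' hq₂
  rw [hq₀] at hmax₁ hmax₂
  have hGF := mem_GF_of_isMinOn hf₁ hmax₁ hq₁ hmin₁ hε₁ hw₁
  have hGH := mem_GH_of_isMinOn hf₂ hmax₂ hq₂ hmin₂ hε₂ hw₂
  have h₁₂ : u₁ ≠ u₂ := by rintro rfl; exact D8_exit_GF hGF hε₂ hw₂
  obtain ⟨f, hf, hmax, hmin⟩ :=
    h.exists_isMaxOn_isMinOn convex_D8 interior_D8_nonempty hu₁ hu₂ h₁₂ hq₁ hq₂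
  exact hf (eq_zero_of_isMaxOn_GF_of_isMinOn_GH hGF hmax hGH hmin)

end Octagon

/-- For `n ≥ 3` the prism `D₈ × [-1/2, 1/2]ⁿ⁻²` is not a parallelohedron:
it admits no (1-fold) lattice tiling of `ℝⁿ`. -/
theorem D8_prism_not_parallelohedron (n : ℕ) (hn : 3 ≤ n) :
    ¬ ∃ Λ : Set (Fin n → ℝ), IsFullLattice Λ ∧
      IsKFoldTiling (prism (by omega : 2 ≤ n) D₈) Λ 1 := by
  rintro ⟨Λ, hΛ, h⟩
  obtain ⟨S, hS⟩ := exists_isKFoldTiling_of_prism _ hΛ.countable h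
  exact D8_not_isKFoldTiling_one S hS
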